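/- Two reduction steps of a process that reduce the same replicated input but different outputs on the same channel are never in conflict: each can still be performed after the other, yielding structurally congruent end results. -/

import Mathlib

/-- Asynchronous CCS with name passing: processes. -/
inductive Proc (Name : Type) : Type
  | nil : Proc Name
  | par : Proc Name → Proc Name → Proc Name
  | res : List Name → Proc Name → Proc Name
  | repInput : Name → List Name → Proc Name → Proc Name
  | input : Name → List Name → Proc Name → Proc Name
  | output : Name → List Name → Proc Name
  | mtch : Name → Name → Proc Name → Proc Name
  | success : Proc Name

/-- A reduction semantics for asynchronous CCS with name passing: a (capture-avoiding)
substitution `subst P ys xs = P[ys/xs]`, a structural congruence `equiv`, and a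
reduction relation `step` closed under the standard rules. -/
structure CCSSem (Name : Type) where
  subst : Proc Name → List Name → List Name → Proc Name
  equiv : Proc Name → Proc Name → Prop
  step : Proc Name → Proc Name → Prop
  equiv_refl : ∀ P, equiv P P
  equiv_symm : ∀ {P Q}, equiv P Q → equiv Q P
  equiv_trans : ∀ {P Q R}, equiv P Q → equiv Q R → equiv P R
  par_nil : ∀ P, equiv (.par P .nil) P
  par_comm : ∀ P Q, equiv (.par P Q) (.par Q P)
  par_assoc : ∀ P Q R, equiv (.par P (.par Q R)) (.par (.par P Q) R)
  res_nil : ∀ cs, equiv (.res cs .nil) .nil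
  mtch_eq : ∀ a P, equiv (.mtch a a P) P
  mtch_ne : ∀ a b P, a ≠ b → equiv (.mtch a b P) .nil
  par_congr : ∀ {P P'} (Q), equiv P P' → equiv (.par P Q) (.par P' Q)
  res_congr : ∀ (cs) {P P'}, equiv P P' → equiv (.res cs P) (.res cs P')
  step_rep : ∀ c xs ys P,
    step (.par (.repInput c xs P) (.output c ys)) (.par (.repInput c xs P) (subst P ys xs))
  step_com : ∀ c xs ys Q, step (.par (.output c ys) (.input c xs Q)) (subst Q ys xs)
  step_par : ∀ {P P'} (Q), step P P' → step (.par P Q) (.par P' Q)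
  step_res : ∀ (cs) {P P'}, step P P' → step (.res cs P) (.res cs P')
  step_cong : ∀ {P P' Q Q'}, equiv P P' → step P' Q' → equiv Q' Q → step P Q

/-! Replication leaves `!c(xs).P` in place after each reduction, so whichever output is
consumed first, the other can still be consumed afterwards. Both orders reach
`((!c(xs).P | P[ys/xs]) | P[zs/xs]) | R`; structural congruence is only needed to bring the
second output next to the replicated input. -/

namespace CCSSem

variable {Name : Type} (C : CCSSem Name)

lemma par_congr_right (P : Proc Name) {Q Q' : Proc Name} (h : C.equiv Q Q') :
    C.equiv (.par P Q) (.par P Q') :=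
  C.equiv_trans (C.par_comm _ _) (C.equiv_trans (C.par_congr _ h) (C.par_comm _ _))

lemma par_right_comm (P Q S : Proc Name) :
    C.equiv (.par (.par P Q) S) (.par (.par P S) Q) :=
  C.equiv_trans (C.equiv_symm (C.par_assoc P Q S))
    (C.equiv_trans (C.par_congr_right P (C.par_comm Q S)) (C.par_assoc P S Q))

variable {C}

lemma step_of_equiv {T T' U U' : Proc Name} (hT : C.equiv T T') (h : C.step T' U')
    (hU : C.equiv U U') : C.step T U :=
  C.step_cong hT h (C.equiv_symm hU)

variable (C)

lemma step_rep_par_par (c : Name) (xs ys : List Name) (P S R : Proc Name) :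
    C.step (.par (.par (.par (.repInput c xs P) (.output c ys)) S) R)
      (.par (.par (.par (.repInput c xs P) (C.subst P ys xs)) S) R) :=
  C.step_par R (C.step_par S (C.step_rep c xs ys P))

lemma step_rep_par_par_swap (c : Name) (xs ys : List Name) (P S R : Proc Name) :
    C.step (.par (.par (.par (.repInput c xs P) S) (.output c ys)) R)
      (.par (.par (.par (.repInput c xs P) S) (C.subst P ys xs)) R) :=
  step_of_equiv (C.par_congr R (C.par_right_comm _ _ _)) (C.step_rep_par_par c xs ys P S R)
    (C.par_congr R (C.par_right_comm _ _ _))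

end CCSSem

/-- Two reduction steps of a process that reduce the same replicated input but
different outputs on the same channel are never in conflict: each can still be
performed after the other, yielding structurally congruent end results. -/
theorem replicated_input_steps_not_in_conflict {Name : Type} (C : CCSSem Name)
    (c : Name) (xs ys zs : List Name) (P R T T₁ T₂ : Proc Name)
    (hT : C.equiv T (.par (.par (.par (.repInput c xs P) (.output c ys)) (.output c zs)) R))
    (hT₁ : C.equiv T₁
      (.par (.par (.par (.repInput c xs P) (C.subst P ys xs)) (.output c zs)) R))
    (hT₂ : C.equiv T₂
      (.par (.par (.par (.repInput c xs P) (.output c ys)) (C.subst P zs xs)) R)) :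
    C.step T T₁ ∧ C.step T T₂ ∧
    ∃ Q₁ Q₂, C.step T₁ Q₁ ∧ C.step T₂ Q₂ ∧ C.equiv Q₁ Q₂ := by
  set Q : Proc Name :=
    .par (.par (.par (.repInput c xs P) (C.subst P ys xs)) (C.subst P zs xs)) R
  refine ⟨?_, ?_, Q, Q, ?_, ?_, C.equiv_refl Q⟩
  · exact CCSSem.step_of_equiv hT (C.step_rep_par_par c xs ys P _ R) hT₁
  · exact CCSSem.step_of_equiv hT (C.step_rep_par_par_swap c xs zs P _ R) hT₂
  · exact CCSSem.step_of_equiv hT₁ (C.step_rep_par_par_swap c xs zs P _ R) (C.equiv_refl Q)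
  · exact CCSSem.step_of_equiv hT₂ (C.step_rep_par_par c xs ys P _ R) (C.equiv_refl Q)
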